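/- arXiv:2310.13434 — 3 statements merged into one kernel-verified Lean document; each statement's English description precedes it below -/
import Mathlib

section
/- Fix a labeled index i ∈ {1, …, nℓ} (so A_{ii} = αℓ), assume λ I_d + (1/n)·X_{−i} A X_{−i}ᵀ is invertible with inverse Q_{−i} and that 1 + (αℓ/n)·x_iᵀ Q_{−i} x_i ≠ 0 (so Q exists). Define ω = (1/n)·Σ_{j=1}^{nℓ} y_j Q x_j and the leave-one-out vector ω_{−i} = (1/n)·Σ_{j=1, j≠i}^{nℓ} y_j Q_{−i} x_j. Then the score of the labeled point x_i decouples as ωᵀ x_i = ( ω_{−i}ᵀ x_i + (1/n)·y_i·x_iᵀ Q_{−i} x_i ) / ( 1 + (αℓ/n)·x_iᵀ Q_{−i} x_i ). -/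
/-!
Removing the column `x_i` from `X` changes `λ I + (1/n) X A Xᵀ` by the rank-one term
`(αℓ/n) x_i x_iᵀ`, so by Sherman–Morrison `x_iᵀ Q = x_iᵀ Q₋ᵢ / (1 + (αℓ/n) x_iᵀ Q₋ᵢ x_i)`.
With `b = (1/n) Σ_j y_j x_j` one has `ω = Q b` and `ω₋ᵢ = Q₋ᵢ (b - (1/n) y_i x_i)`, and the
decoupling formula is `ωᵀ x_i = x_iᵀ Q b` rewritten with these two facts.
-/

open Matrix

namespace Matrix

variable {m n K : Type*} [Fintype n] [DecidableEq n]

theorem det_add_vecMulVec [CommRing K] {A : Matrix n n K} (hA : IsUnit A.det) (u v : n → K) :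
    (A + vecMulVec u v).det = A.det * (1 + v ⬝ᵥ A⁻¹ *ᵥ u) := by
  rw [vecMulVec_eq Unit, det_add_replicateCol_mul_replicateRow hA, det_unique (n := Unit),
    dotProduct_mulVec]
  simp [mul_apply, vecMul, dotProduct]

theorem vecMul_inv_add_vecMulVec [Field K] {A : Matrix n n K} (hA : IsUnit A.det) (u v : n → K)
    (h : 1 + v ⬝ᵥ A⁻¹ *ᵥ u ≠ 0) :
    v ᵥ* (A + vecMulVec u v)⁻¹ = (1 + v ⬝ᵥ A⁻¹ *ᵥ u)⁻¹ • (v ᵥ* A⁻¹) := by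
  have hN : IsUnit (A + vecMulVec u v).det := by
    rw [det_add_vecMulVec hA]; exact hA.mul (isUnit_iff_ne_zero.mpr h)
  have key : v ᵥ* A⁻¹ ᵥ* (A + vecMulVec u v) = (1 + v ⬝ᵥ A⁻¹ *ᵥ u) • v := by
    rw [vecMul_add, vecMul_vecMul, nonsing_inv_mul _ hA, vecMul_one, vecMul_vecMulVec,
      ← dotProduct_mulVec, add_smul, one_smul]
  rw [eq_inv_smul_iff₀ h, ← smul_vecMul, ← key, vecMul_vecMul, mul_nonsing_inv _ hN, vecMul_one]

theorem mul_diagonal_mul_transpose_eq_updateCol_add [CommRing K] (X : Matrix m n K) (a : n → K)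
    (i : n) :
    X * diagonal a * Xᵀ = X.updateCol i 0 * diagonal a * (X.updateCol i 0)ᵀ
      + a i • vecMulVec (fun r => X r i) (fun r => X r i) := by
  ext r t
  rw [add_apply, mul_apply, mul_apply, smul_apply, vecMulVec_apply, smul_eq_mul,
    ← Finset.add_sum_erase _ _ (Finset.mem_univ i), ← Finset.add_sum_erase _ _ (Finset.mem_univ i)]
  simp only [mul_diagonal, transpose_apply, updateCol_self, Pi.zero_apply, zero_mul, zero_add]
  have hcols : ∀ j ∈ Finset.univ.erase i,
      X.updateCol i 0 r j * a j * X.updateCol i 0 t j = X r j * a j * X t j := fun j hj => by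
    rw [updateCol_ne (Finset.ne_of_mem_erase hj), updateCol_ne (Finset.ne_of_mem_erase hj)]
  rw [Finset.sum_congr rfl hcols]
  ring

end Matrix

theorem filter_castAdd_ne_eq_erase {nℓ nu : ℕ} (i : Fin (nℓ + nu)) (hi : (i : ℕ) < nℓ) :
    Finset.univ.filter (fun j : Fin nℓ => Fin.castAdd nu j ≠ i) = Finset.univ.erase ⟨i, hi⟩ := by
  ext j
  simp [Fin.ext_iff]

theorem score_decoupling_labeled_general
    (d nℓ nu : ℕ)
    (X : Matrix (Fin d) (Fin (nℓ + nu)) ℝ)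
    (y : Fin nℓ → ℝ)
    (αℓ αu lam : ℝ)
    (A : Matrix (Fin (nℓ + nu)) (Fin (nℓ + nu)) ℝ)
    (hA : A = Matrix.diagonal (fun i : Fin (nℓ + nu) => if (i : ℕ) < nℓ then αℓ else -αu))
    (i : Fin (nℓ + nu)) (hi : (i : ℕ) < nℓ)
    (hinv : IsUnit (lam • (1 : Matrix (Fin d) (Fin d) ℝ)
      + ((nℓ + nu : ℕ) : ℝ)⁻¹ • (X.updateCol i 0 * A * (X.updateCol i 0)ᵀ)))
    (Qmi : Matrix (Fin d) (Fin d) ℝ)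
    (hQmi : Qmi = (lam • (1 : Matrix (Fin d) (Fin d) ℝ)
      + ((nℓ + nu : ℕ) : ℝ)⁻¹ • (X.updateCol i 0 * A * (X.updateCol i 0)ᵀ))⁻¹)
    (Q : Matrix (Fin d) (Fin d) ℝ)
    (hQ : Q = (lam • (1 : Matrix (Fin d) (Fin d) ℝ)
      + ((nℓ + nu : ℕ) : ℝ)⁻¹ • (X * A * Xᵀ))⁻¹)
    (xi : Fin d → ℝ) (hxi : xi = fun r => X r i)
    (hden : 1 + (αℓ / ((nℓ + nu : ℕ) : ℝ)) * (xi ⬝ᵥ Qmi.mulVec xi) ≠ 0)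
    (ω ωmi : Fin d → ℝ)
    (hω : ω = ((nℓ + nu : ℕ) : ℝ)⁻¹ •
      ∑ j : Fin nℓ, y j • Q.mulVec (fun r => X r (Fin.castAdd nu j)))
    (hωmi : ωmi = ((nℓ + nu : ℕ) : ℝ)⁻¹ •
      ∑ j ∈ Finset.univ.filter (fun j : Fin nℓ => Fin.castAdd nu j ≠ i),
        y j • Qmi.mulVec (fun r => X r (Fin.castAdd nu j))) :
    ω ⬝ᵥ xi
      = (ωmi ⬝ᵥ xi + ((nℓ + nu : ℕ) : ℝ)⁻¹ * (y ⟨i, hi⟩ * (xi ⬝ᵥ Qmi.mulVec xi)))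
        / (1 + (αℓ / ((nℓ + nu : ℕ) : ℝ)) * (xi ⬝ᵥ Qmi.mulVec xi)) := by
  set c : ℝ := ((nℓ + nu : ℕ) : ℝ)⁻¹
  set M := lam • (1 : Matrix (Fin d) (Fin d) ℝ) + c • (X.updateCol i 0 * A * (X.updateCol i 0)ᵀ)
  set q := xi ⬝ᵥ Qmi *ᵥ xi
  set b := ∑ j : Fin nℓ, y j • fun r => X r (Fin.castAdd nu j)
  have hαℓc : αℓ / ((nℓ + nu : ℕ) : ℝ) = c * αℓ := div_eq_inv_mul _ _
  rw [hαℓc] at hden ⊢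
  have hQ_rank_one : Q = (M + vecMulVec ((c * αℓ) • xi) xi)⁻¹ := by
    rw [hQ, hA, mul_diagonal_mul_transpose_eq_updateCol_add X _ i, ← hA, if_pos hi, ← hxi,
      smul_add, add_assoc, smul_smul, smul_vecMulVec]
  have hrow : xi ᵥ* Q = (1 + c * αℓ * q)⁻¹ • (xi ᵥ* Qmi) := by
    have hγ : 1 + xi ⬝ᵥ M⁻¹ *ᵥ ((c * αℓ) • xi) = 1 + c * αℓ * q := by
      rw [mulVec_smul, dotProduct_smul, smul_eq_mul, ← hQmi]
    rw [hQ_rank_one, vecMul_inv_add_vecMulVec ((isUnit_iff_isUnit_det M).mp hinv) _ _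
      (hγ ▸ hden), hγ, hQmi]
  have hω' : ω = Q *ᵥ (c • b) := by
    simp only [hω, b, mulVec_smul, mulVec_sum]
  have hωmi' : ωmi = Qmi *ᵥ (c • (b - y ⟨i, hi⟩ • xi)) := by
    have hcast : Fin.castAdd nu ⟨i, hi⟩ = i := rfl
    rw [hωmi, filter_castAdd_ne_eq_erase i hi, Finset.sum_erase_eq_sub (Finset.mem_univ _)]
    simp only [b, hxi, hcast, mulVec_smul, mulVec_sub, mulVec_sum]
  have hscore : ω ⬝ᵥ xi = (1 + c * αℓ * q)⁻¹ * (xi ᵥ* Qmi ⬝ᵥ c • b) := by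
    rw [hω', dotProduct_comm, dotProduct_mulVec, hrow, smul_dotProduct, smul_eq_mul]
  have hloo : ωmi ⬝ᵥ xi = xi ᵥ* Qmi ⬝ᵥ c • b - c * (y ⟨i, hi⟩ * q) := by
    rw [hωmi', dotProduct_comm, dotProduct_mulVec]
    simp only [dotProduct_smul, dotProduct_sub, smul_eq_mul, ← dotProduct_mulVec, q]
    ring
  rw [hscore, hloo, sub_add_cancel, inv_mul_eq_div]

/-- Decoupling of the score at a labeled point. For a labeled index `i`
(`A_{ii} = αℓ`), with `Q_{−i}` the leave-one-out resolvent, `ω = (1/n)·Σ_{j≤nℓ} y_j Q x_j` and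
`ω_{−i} = (1/n)·Σ_{j≤nℓ, j≠i} y_j Q_{−i} x_j`, the score decouples as
`ωᵀ x_i = (ω_{−i}ᵀ x_i + (1/n)·y_i·x_iᵀ Q_{−i} x_i) / (1 + (αℓ/n)·x_iᵀ Q_{−i} x_i)`. -/
theorem score_decoupling_labeled
    (d nℓ nu : ℕ) (hd : 1 ≤ d) (hnℓ : 1 ≤ nℓ) (hnu : 1 ≤ nu)
    (X : Matrix (Fin d) (Fin (nℓ + nu)) ℝ)
    (y : Fin nℓ → ℝ) (hy : ∀ j, y j = 1 ∨ y j = -1)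
    (αℓ αu lam : ℝ) (hαℓ : 0 ≤ αℓ) (hαu : 0 ≤ αu) (hlam : 0 < lam)
    (A : Matrix (Fin (nℓ + nu)) (Fin (nℓ + nu)) ℝ)
    (hA : A = Matrix.diagonal (fun i : Fin (nℓ + nu) => if (i : ℕ) < nℓ then αℓ else -αu))
    (i : Fin (nℓ + nu)) (hi : (i : ℕ) < nℓ)
    (hinv : IsUnit (lam • (1 : Matrix (Fin d) (Fin d) ℝ)
      + ((nℓ + nu : ℕ) : ℝ)⁻¹ • (X.updateCol i 0 * A * (X.updateCol i 0)ᵀ)))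
    (Qmi : Matrix (Fin d) (Fin d) ℝ)
    (hQmi : Qmi = (lam • (1 : Matrix (Fin d) (Fin d) ℝ)
      + ((nℓ + nu : ℕ) : ℝ)⁻¹ • (X.updateCol i 0 * A * (X.updateCol i 0)ᵀ))⁻¹)
    (Q : Matrix (Fin d) (Fin d) ℝ)
    (hQ : Q = (lam • (1 : Matrix (Fin d) (Fin d) ℝ)
      + ((nℓ + nu : ℕ) : ℝ)⁻¹ • (X * A * Xᵀ))⁻¹)
    (xi : Fin d → ℝ) (hxi : xi = fun r => X r i)
    (hden : 1 + (αℓ / ((nℓ + nu : ℕ) : ℝ)) * (xi ⬝ᵥ Qmi.mulVec xi) ≠ 0)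
    (ω ωmi : Fin d → ℝ)
    (hω : ω = ((nℓ + nu : ℕ) : ℝ)⁻¹ •
      ∑ j : Fin nℓ, y j • Q.mulVec (fun r => X r (Fin.castAdd nu j)))
    (hωmi : ωmi = ((nℓ + nu : ℕ) : ℝ)⁻¹ •
      ∑ j ∈ Finset.univ.filter (fun j : Fin nℓ => Fin.castAdd nu j ≠ i),
        y j • Qmi.mulVec (fun r => X r (Fin.castAdd nu j))) :
    ω ⬝ᵥ xi
      = (ωmi ⬝ᵥ xi + ((nℓ + nu : ℕ) : ℝ)⁻¹ * (y ⟨i, hi⟩ * (xi ⬝ᵥ Qmi.mulVec xi)))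
        / (1 + (αℓ / ((nℓ + nu : ℕ) : ℝ)) * (xi ⬝ᵥ Qmi.mulVec xi)) :=
  score_decoupling_labeled_general d nℓ nu X y αℓ αu lam A hA i hi hinv Qmi hQmi Q hQ xi hxi hden ω
    ωmi hω hωmi
end

section
/- Let S = (1/n)·Xu Xuᵀ with orthonormal eigenvectors u_1, …, u_d and eigenvalues λ_1 > λ_2 ≥ … ≥ λ_d (so the largest eigenvalue λ_max = λ_1 is simple, with unit eigenvector u_max = u_1). Then, as λ → λ_max from above, (λ − λ_max) · (1/n)·yℓᵀ Xℓᵀ (λ I_d − S)^{−1} Xu converges to (1/n)·(yℓᵀ Xℓᵀ u_max)·(u_maxᵀ Xu); i.e., in the limit the unlabeled score vector is proportional to u_maxᵀ Xu, the projection of the unlabeled data onto the top eigenvector of (1/n)·Xu Xuᵀ (spectral clustering). -/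
open Matrix Filter Topology

private lemma vecMul_vecMulVec' {m : ℕ} (a v : Fin m → ℝ) (w : Fin m → ℝ) :
    Matrix.vecMul a (Matrix.vecMulVec v w) = (a ⬝ᵥ v) • w := by
  funext j
  simp [Matrix.vecMul, Matrix.vecMulVec_apply, dotProduct, Finset.sum_mul, mul_assoc]

private lemma sum_vecMulVec_eq_one {d : ℕ} (u : Fin d → Fin d → ℝ)
    (hortho : ∀ i j : Fin d, u i ⬝ᵥ u j = if i = j then (1 : ℝ) else 0) :
    ∑ i : Fin d, Matrix.vecMulVec (u i) (u i) = (1 : Matrix (Fin d) (Fin d) ℝ) := by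
  have h1 : (Matrix.of u) * (Matrix.of u)ᵀ = 1 := by
    ext i j
    simpa [Matrix.mul_apply, Matrix.one_apply, dotProduct] using hortho i j
  have h2 : (Matrix.of u)ᵀ * (Matrix.of u) = 1 := mul_eq_one_comm.mp h1
  calc ∑ i : Fin d, Matrix.vecMulVec (u i) (u i) = (Matrix.of u)ᵀ * (Matrix.of u) := by
        ext p q
        simp [Matrix.sum_apply, Matrix.vecMulVec_apply, Matrix.mul_apply, mul_comm]
    _ = 1 := h2

private lemma vecMul_sum' {m n k : ℕ} (a : Fin m → ℝ) (M : Fin k → Matrix (Fin m) (Fin n) ℝ) :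
    Matrix.vecMul a (∑ i : Fin k, M i) = ∑ i : Fin k, Matrix.vecMul a (M i) := by
  funext j
  simp only [Matrix.vecMul, dotProduct, Matrix.sum_apply, Finset.sum_apply, Finset.mul_sum]
  exact Finset.sum_comm

private lemma vecMul_smul' {m n : ℕ} (r : ℝ) (v : Fin m → ℝ) (M : Matrix (Fin m) (Fin n) ℝ) :
    Matrix.vecMul v (r • M) = r • Matrix.vecMul v M := by
  funext j; simp [Matrix.vecMul, dotProduct, Finset.mul_sum, mul_left_comm]

private lemma smul_vecMul' {m n : ℕ} (r : ℝ) (v : Fin m → ℝ) (M : Matrix (Fin m) (Fin n) ℝ) :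
    Matrix.vecMul (r • v) M = r • Matrix.vecMul v M := by
  funext j; simp [Matrix.vecMul, dotProduct, Finset.mul_sum, mul_assoc]

private lemma vecMulVec_mul_vecMulVec' {d : ℕ} (v w x y : Fin d → ℝ) :
    Matrix.vecMulVec v w * Matrix.vecMulVec x y = (w ⬝ᵥ x) • Matrix.vecMulVec v y := by
  ext p q
  simp only [Matrix.mul_apply, Matrix.vecMulVec_apply, Matrix.smul_apply, dotProduct,
    smul_eq_mul, Finset.sum_mul]
  refine Finset.sum_congr rfl fun k _ => by ring


/-- Spectral clustering limit. With `S = (1/n)·Xu Xuᵀ = Σ_i λ_i u_i u_iᵀ` for an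
orthonormal eigenbasis whose top eigenvalue `λ_max = ev i₀` (here `i₀ = 0`) is simple, as
`λ → λ_max` from above,
`(λ − λ_max)·(1/n)·yℓᵀ Xℓᵀ (λ I_d − S)⁻¹ Xu → (1/n)·(yℓᵀ Xℓᵀ u_max)·(u_maxᵀ Xu)`,
i.e. in the limit the unlabeled score vector is proportional to the projection of the
unlabeled data onto the top eigenvector of `(1/n)·Xu Xuᵀ`. -/
theorem unlabeled_score_spectral_clustering_limit
    (d nℓ nu : ℕ) (hd : 0 < d) (hnℓ : 1 ≤ nℓ) (hnu : 1 ≤ nu)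
    (Xℓ : Matrix (Fin d) (Fin nℓ) ℝ) (Xu : Matrix (Fin d) (Fin nu) ℝ)
    (yℓ : Fin nℓ → ℝ) (hy : ∀ i, yℓ i = 1 ∨ yℓ i = -1)
    (S : Matrix (Fin d) (Fin d) ℝ)
    (hS : S = ((nℓ + nu : ℕ) : ℝ)⁻¹ • (Xu * Xuᵀ))
    (u : Fin d → Fin d → ℝ) (ev : Fin d → ℝ)
    (hortho : ∀ i j : Fin d, u i ⬝ᵥ u j = if i = j then (1 : ℝ) else 0)
    (hdecomp : S = ∑ i : Fin d, ev i • Matrix.vecMulVec (u i) (u i))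
    (htop : ∀ i : Fin d, i ≠ ⟨0, hd⟩ → ev i < ev ⟨0, hd⟩) :
    Tendsto
      (fun lam : ℝ => (lam - ev ⟨0, hd⟩) •
        (((nℓ + nu : ℕ) : ℝ)⁻¹ •
          Matrix.vecMul (Xℓ.mulVec yℓ)
            ((lam • (1 : Matrix (Fin d) (Fin d) ℝ) - S)⁻¹ * Xu)))
      (nhdsWithin (ev ⟨0, hd⟩) (Set.Ioi (ev ⟨0, hd⟩)))
      (nhds (((nℓ + nu : ℕ) : ℝ)⁻¹ •
        ((Xℓ.mulVec yℓ ⬝ᵥ u ⟨0, hd⟩) • Matrix.vecMul (u ⟨0, hd⟩) Xu))) := by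
  set i₀ : Fin d := ⟨0, hd⟩ with hi₀
  set a : Fin d → ℝ := Xℓ.mulVec yℓ with ha
  set c : ℝ := ((nℓ + nu : ℕ) : ℝ)⁻¹ with hc
  have hone := sum_vecMulVec_eq_one u hortho
  -- nonvanishing of lam - ev i for lam > ev i₀
  have hne : ∀ lam : ℝ, lam ∈ Set.Ioi (ev i₀) → ∀ i : Fin d, lam - ev i ≠ 0 := by
    intro lam hlam i
    rcases eq_or_ne i i₀ with h | h
    · subst h; exact sub_ne_zero_of_ne (ne_of_gt hlam)
    · exact sub_ne_zero_of_ne (ne_of_gt (lt_trans (htop i h) hlam))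
  -- resolvent formula
  have hres : ∀ lam : ℝ, lam ∈ Set.Ioi (ev i₀) →
      (lam • (1 : Matrix (Fin d) (Fin d) ℝ) - S)⁻¹
        = ∑ i : Fin d, (lam - ev i)⁻¹ • Matrix.vecMulVec (u i) (u i) := by
    intro lam hlam
    apply Matrix.inv_eq_right_inv
    have hA : lam • (1 : Matrix (Fin d) (Fin d) ℝ) - S
        = ∑ i : Fin d, (lam - ev i) • Matrix.vecMulVec (u i) (u i) := by
      rw [hdecomp, ← hone, Finset.smul_sum, ← Finset.sum_sub_distrib]
      exact Finset.sum_congr rfl fun i _ => (sub_smul lam (ev i) _).symm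
    rw [hA, Finset.sum_mul_sum]
    have : ∀ i ∈ Finset.univ, ∀ j ∈ (Finset.univ : Finset (Fin d)),
        ((lam - ev i) • Matrix.vecMulVec (u i) (u i)) *
          ((lam - ev j)⁻¹ • Matrix.vecMulVec (u j) (u j))
        = if i = j then Matrix.vecMulVec (u i) (u i) else 0 := by
      intro i _ j _
      rw [Matrix.smul_mul, Matrix.mul_smul, vecMulVec_mul_vecMulVec', hortho i j]
      by_cases h : i = j
      · subst h
        simp [smul_smul, mul_inv_cancel₀ (hne lam hlam i)]
      · simp [h]
    rw [Finset.sum_congr rfl fun i hi => Finset.sum_congr rfl (this i hi)]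
    simp [Finset.sum_ite_eq, hone]
  -- the explicit form of the function on Ioi
  set w : Fin d → (Fin nu → ℝ) :=
    fun i => c • ((a ⬝ᵥ u i) • Matrix.vecMul (u i) Xu) with hw
  have heq : ∀ lam : ℝ, lam ∈ Set.Ioi (ev i₀) →
      (lam - ev i₀) • (c • Matrix.vecMul a
          ((lam • (1 : Matrix (Fin d) (Fin d) ℝ) - S)⁻¹ * Xu))
        = ∑ i : Fin d, ((lam - ev i₀) * (lam - ev i)⁻¹) • w i := by
    intro lam hlam
    rw [hres lam hlam, Matrix.sum_mul]
    have : Matrix.vecMul a (∑ i : Fin d,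
        ((lam - ev i)⁻¹ • Matrix.vecMulVec (u i) (u i)) * Xu)
        = ∑ i : Fin d, (lam - ev i)⁻¹ • ((a ⬝ᵥ u i) • Matrix.vecMul (u i) Xu) := by
      rw [vecMul_sum']
      refine Finset.sum_congr rfl fun i _ => ?_
      rw [Matrix.smul_mul, vecMul_smul', ← Matrix.vecMul_vecMul, vecMul_vecMulVec',
        smul_vecMul']
    rw [this, Finset.smul_sum, Finset.smul_sum]
    refine Finset.sum_congr rfl fun i _ => ?_
    rw [hw]
    simp only [smul_smul]
    congr 1
    ring
  have hEv : (fun lam : ℝ => (lam - ev i₀) • (c • Matrix.vecMul a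
        ((lam • (1 : Matrix (Fin d) (Fin d) ℝ) - S)⁻¹ * Xu)))
      =ᶠ[nhdsWithin (ev i₀) (Set.Ioi (ev i₀))]
      (fun lam : ℝ => ∑ i : Fin d, ((lam - ev i₀) * (lam - ev i)⁻¹) • w i) :=
    eventually_nhdsWithin_of_forall heq
  rw [tendsto_congr' hEv]
  have key : Tendsto (fun lam : ℝ => ∑ i : Fin d, ((lam - ev i₀) * (lam - ev i)⁻¹) • w i)
      (nhdsWithin (ev i₀) (Set.Ioi (ev i₀)))
      (nhds (∑ i : Fin d, (if i = i₀ then (1:ℝ) else 0) • w i)) := by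
    refine tendsto_finset_sum _ fun i _ => ?_
    refine Tendsto.smul_const ?_ (w i)
    by_cases h : i = i₀
    · subst h
      have : ∀ lam ∈ Set.Ioi (ev i₀), (lam - ev i₀) * (lam - ev i₀)⁻¹ = 1 := by
        intro lam hlam
        exact mul_inv_cancel₀ (hne lam hlam i₀)
      rw [tendsto_congr' (eventually_nhdsWithin_of_forall this)]
      simp only [if_pos rfl]
      exact tendsto_const_nhds
    · rw [if_neg h]
      have hne' : ev i₀ - ev i ≠ 0 := sub_ne_zero_of_ne (ne_of_gt (htop i h))
      have hcont : Tendsto (fun lam : ℝ => (lam - ev i₀) * (lam - ev i)⁻¹)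
          (nhds (ev i₀)) (nhds ((ev i₀ - ev i₀) * (ev i₀ - ev i)⁻¹)) := by
        exact ((continuousAt_id.sub continuousAt_const).mul
          ((continuousAt_id.sub continuousAt_const).inv₀ hne'))
      have h2 := hcont.mono_left (nhdsWithin_le_nhds (s := Set.Ioi (ev i₀)))
      simpa using h2
  have hsum : (∑ i : Fin d, (if i = i₀ then (1:ℝ) else 0) • w i) = w i₀ := by
    rw [Finset.sum_eq_single i₀]
    · simp
    · intro b _ hb; simp [hb]
    · intro h; exact absurd (Finset.mem_univ i₀) h
  rw [hsum] at key
  simpa [hw] using key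
end

section
/- Let x_1, …, x_p be i.i.d. Gaussian random vectors N(μ, I_d) in ℝ^d, let x'_1, …, x'_q be i.i.d. Gaussian random vectors N(ν, I_d), with the two families independent of each other. Define the cross-class estimator T = (1/(p·q))·Σ_{k=1}^{p} Σ_{l=1}^{q} ⟨x_k, x'_l⟩. Then T is an unbiased estimator of the mean inner product, E[T] = ⟨μ, ν⟩, and its variance equals Var(T) = ‖μ‖²/q + ‖ν‖²/p + d/(p·q). -/
/-!
Summing over the samples first, `p q T = ∑ⱼ Uⱼ Vⱼ` with `Uⱼ = ∑ₖ xₖⱼ` and `Vⱼ = ∑ₗ x'ₗⱼ`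
(`sumLeft Z j` and `sumRight Z j` below). `Uⱼ` and `Vⱼ` are independent with means `p μⱼ`, `q νⱼ`
and variances `p`, `q`, and the products `Uⱼ Vⱼ` for distinct `j` are functions of disjoint
blocks of coordinates, hence independent. So `Var (p q T) = ∑ⱼ Var (Uⱼ Vⱼ)`, and for independent
`U`, `V` one has `Var (U V) = Var U Var V + Var U (𝔼 V)² + (𝔼 U)² Var V = p q + p q² νⱼ² + p² q μⱼ²`.
-/

open MeasureTheory ProbabilityTheory
open scoped NNReal

namespace ProbabilityTheory

variable {Ω ι : Type*} {mΩ : MeasurableSpace Ω} {μ : Measure Ω}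

lemma measurable_iSup_comap_of_mem {β : Type*} [mβ : MeasurableSpace β] {Z : ι → Ω → β}
    {S : Set ι} {i : ι} (hi : i ∈ S) :
    Measurable[⨆ j ∈ S, mβ.comap (Z j)] (Z i) :=
  (comap_measurable (Z i)).mono (le_iSup₂ (f := fun j _ => mβ.comap (Z j)) i hi) le_rfl

lemma measurable_iSup_comap_sum {β : Type*} [mβ : MeasurableSpace β] [AddCommMonoid β]
    [MeasurableAdd₂ β] {κ : Type*} {Z : ι → Ω → β} {S : Set ι} (s : Finset κ) {e : κ → ι}
    (he : ∀ k ∈ s, e k ∈ S) :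
    Measurable[⨆ j ∈ S, mβ.comap (Z j)] (∑ k ∈ s, Z (e k)) := by
  rw [Finset.sum_fn]
  exact Finset.measurable_sum s fun k hk => measurable_iSup_comap_of_mem (he k hk)

lemma iIndepFun.indepFun_of_measurable_iSup {β γ δ : Type*} [mβ : MeasurableSpace β]
    [MeasurableSpace γ] [MeasurableSpace δ] {Z : ι → Ω → β} (h : iIndepFun Z μ)
    (hZ : ∀ i, Measurable (Z i)) {S T : Set ι} (hST : Disjoint S T) {X : Ω → γ} {Y : Ω → δ}
    (hX : Measurable[⨆ i ∈ S, mβ.comap (Z i)] X) (hY : Measurable[⨆ i ∈ T, mβ.comap (Z i)] Y) :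
    IndepFun X Y μ := by
  rw [IndepFun_iff_Indep]
  exact indep_of_indep_of_le
    (indep_iSup_of_disjoint (fun i => (hZ i).comap_le) h.iIndep hST) hX.comap_le hY.comap_le

lemma iIndepFun.variance_sum_comp {κ : Type*} {Z : ι → Ω → ℝ} (h : iIndepFun Z μ)
    (hZ : ∀ i, MemLp (Z i) 2 μ) {e : κ → ι} (he : e.Injective) (s : Finset κ) :
    Var[∑ k ∈ s, Z (e k); μ] = ∑ k ∈ s, Var[Z (e k); μ] :=
  IndepFun.variance_sum (fun k _ => hZ (e k)) fun _ _ _ _ hne => h.indepFun (he.ne hne)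

section IndepFun

variable {X Y : Ω → ℝ}

lemma IndepFun.memLp_two_mul (hXY : IndepFun X Y μ) (hX : MemLp X 2 μ) (hY : MemLp Y 2 μ) :
    MemLp (X * Y) 2 μ := by
  have hsq : IndepFun (fun ω => X ω ^ 2) (fun ω => Y ω ^ 2) μ :=
    hXY.comp (measurable_id.pow_const 2) (measurable_id.pow_const 2)
  refine (memLp_two_iff_integrable_sq (hX.1.mul hY.1)).mpr ?_
  simp only [Pi.mul_apply, mul_pow]
  exact hsq.integrable_mul hX.integrable_sq hY.integrable_sq

lemma IndepFun.variance_mul [IsProbabilityMeasure μ] (hXY : IndepFun X Y μ) (hX : MemLp X 2 μ)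
    (hY : MemLp Y 2 μ) :
    Var[X * Y; μ] = Var[X; μ] * Var[Y; μ] + Var[X; μ] * μ[Y] ^ 2 + μ[X] ^ 2 * Var[Y; μ] := by
  have hsq : IndepFun (fun ω => X ω ^ 2) (fun ω => Y ω ^ 2) μ :=
    hXY.comp (measurable_id.pow_const 2) (measurable_id.pow_const 2)
  have hmul : μ[X * Y] = μ[X] * μ[Y] :=
    hXY.integral_mul_eq_mul_integral hX.1 hY.1
  have hmul_sq : μ[(X * Y) ^ 2] = μ[X ^ 2] * μ[Y ^ 2] := by
    simp only [Pi.pow_apply, Pi.mul_apply, mul_pow]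
    exact hsq.integral_mul_eq_mul_integral (hX.1.pow 2) (hY.1.pow 2)
  rw [variance_eq_sub (hXY.memLp_two_mul hX hY), variance_eq_sub hX, variance_eq_sub hY,
    hmul_sq, hmul]
  ring

end IndepFun

section Gaussian

variable {X : Ω → ℝ} {m : ℝ} {v : ℝ≥0}

lemma HasLaw.memLp_of_gaussianReal (hX : HasLaw X (gaussianReal m v) μ) (p : ℝ≥0) :
    MemLp X p μ :=
  (memLp_map_measure_iff aestronglyMeasurable_id hX.aemeasurable).mp
    (hX.map_eq ▸ memLp_id_gaussianReal p)

lemma HasLaw.integral_eq_of_gaussianReal (hX : HasLaw X (gaussianReal m v) μ) : μ[X] = m :=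
  hX.integral_eq.trans integral_id_gaussianReal

lemma HasLaw.variance_eq_of_gaussianReal (hX : HasLaw X (gaussianReal m v) μ) : Var[X; μ] = v :=
  hX.variance_eq.trans variance_id_gaussianReal

end Gaussian

section BilinearSum

variable {α β γ : Type*} {Z : (α ⊕ β) × γ → Ω → ℝ}

def sumLeft [Fintype α] (Z : (α ⊕ β) × γ → Ω → ℝ) (j : γ) : Ω → ℝ := ∑ a, Z (.inl a, j)

def sumRight [Fintype β] (Z : (α ⊕ β) × γ → Ω → ℝ) (j : γ) : Ω → ℝ := ∑ b, Z (.inr b, j)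

lemma iIndepFun.indepFun_sumLeft_sumRight [Fintype α] [Fintype β] (h : iIndepFun Z μ)
    (hZ : ∀ s, Measurable (Z s)) (j : γ) : IndepFun (sumLeft Z j) (sumRight Z j) μ := by
  refine h.indepFun_of_measurable_iSup hZ (S := Set.range fun a => (.inl a, j))
    (T := Set.range fun b => (.inr b, j)) ?_
    (measurable_iSup_comap_sum _ fun a _ => ⟨a, rfl⟩)
    (measurable_iSup_comap_sum _ fun b _ => ⟨b, rfl⟩)
  simp [Set.disjoint_left]

lemma iIndepFun.pairwise_indepFun_sumLeft_mul_sumRight [Fintype α] [Fintype β]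
    (h : iIndepFun Z μ) (hZ : ∀ s, Measurable (Z s)) :
    Pairwise fun j j' : γ =>
      IndepFun (sumLeft Z j * sumRight Z j) (sumLeft Z j' * sumRight Z j') μ := by
  intro j j' hjj'
  have hblock : ∀ j : γ,
      Measurable[⨆ s ∈ {s : (α ⊕ β) × γ | s.2 = j}, MeasurableSpace.comap (Z s) inferInstance]
        (sumLeft Z j * sumRight Z j) := fun j =>
    (measurable_iSup_comap_sum (S := {s : (α ⊕ β) × γ | s.2 = j}) _ fun _ _ => rfl).mul
      (measurable_iSup_comap_sum _ fun _ _ => rfl)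
  exact h.indepFun_of_measurable_iSup hZ
    (Set.disjoint_left.mpr fun s hs hs' => hjj' (hs.symm.trans hs')) (hblock j) (hblock j')

lemma memLp_sumLeft [Fintype α] (hL2 : ∀ s, MemLp (Z s) 2 μ) (j : γ) :
    MemLp (sumLeft Z j) 2 μ :=
  memLp_finsetSum' _ fun _ _ => hL2 _

lemma memLp_sumRight [Fintype β] (hL2 : ∀ s, MemLp (Z s) 2 μ) (j : γ) :
    MemLp (sumRight Z j) 2 μ :=
  memLp_finsetSum' _ fun _ _ => hL2 _

lemma integral_sumLeft [Fintype α] [IsFiniteMeasure μ] (hL2 : ∀ s, MemLp (Z s) 2 μ) {j : γ}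
    {c : ℝ} (hc : ∀ a, μ[Z (.inl a, j)] = c) : μ[sumLeft Z j] = Fintype.card α * c := by
  simp only [sumLeft, Finset.sum_apply]
  rw [integral_finsetSum _ fun a _ => (hL2 _).integrable one_le_two]
  simp [hc]

lemma integral_sumRight [Fintype β] [IsFiniteMeasure μ] (hL2 : ∀ s, MemLp (Z s) 2 μ) {j : γ}
    {c : ℝ} (hc : ∀ b, μ[Z (.inr b, j)] = c) : μ[sumRight Z j] = Fintype.card β * c := by
  simp only [sumRight, Finset.sum_apply]
  rw [integral_finsetSum _ fun b _ => (hL2 _).integrable one_le_two]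
  simp [hc]

lemma iIndepFun.variance_sumLeft [Fintype α] (h : iIndepFun Z μ) (hL2 : ∀ s, MemLp (Z s) 2 μ)
    (hvar : ∀ s, Var[Z s; μ] = 1) (j : γ) : Var[sumLeft Z j; μ] = Fintype.card α := by
  rw [sumLeft, h.variance_sum_comp hL2 (fun a a' haa' => by simpa using haa')]
  simp [hvar]

lemma iIndepFun.variance_sumRight [Fintype β] (h : iIndepFun Z μ) (hL2 : ∀ s, MemLp (Z s) 2 μ)
    (hvar : ∀ s, Var[Z s; μ] = 1) (j : γ) : Var[sumRight Z j; μ] = Fintype.card β := by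
  rw [sumRight, h.variance_sum_comp hL2 (fun b b' hbb' => by simpa using hbb')]
  simp [hvar]

variable [Fintype α] [Fintype β] [Fintype γ] [IsProbabilityMeasure μ] {m n : γ → ℝ}

lemma iIndepFun.integral_sum_sumLeft_mul_sumRight (h : iIndepFun Z μ)
    (hZ : ∀ s, Measurable (Z s)) (hL2 : ∀ s, MemLp (Z s) 2 μ)
    (hm : ∀ a j, μ[Z (.inl a, j)] = m j) (hn : ∀ b j, μ[Z (.inr b, j)] = n j) :
    μ[∑ j, sumLeft Z j * sumRight Z j] =
      ∑ j, Fintype.card α * m j * (Fintype.card β * n j) := by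
  simp only [Finset.sum_apply]
  rw [integral_finsetSum _ fun j _ =>
    ((h.indepFun_sumLeft_sumRight hZ j).memLp_two_mul (memLp_sumLeft hL2 j)
      (memLp_sumRight hL2 j)).integrable one_le_two]
  refine Finset.sum_congr rfl fun j _ => ?_
  rw [(h.indepFun_sumLeft_sumRight hZ j).integral_mul_eq_mul_integral
    (memLp_sumLeft hL2 j).1 (memLp_sumRight hL2 j).1, integral_sumLeft hL2 (hm · j),
    integral_sumRight hL2 (hn · j)]

lemma iIndepFun.variance_sum_sumLeft_mul_sumRight (h : iIndepFun Z μ)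
    (hZ : ∀ s, Measurable (Z s)) (hL2 : ∀ s, MemLp (Z s) 2 μ) (hvar : ∀ s, Var[Z s; μ] = 1)
    (hm : ∀ a j, μ[Z (.inl a, j)] = m j) (hn : ∀ b j, μ[Z (.inr b, j)] = n j) :
    Var[∑ j, sumLeft Z j * sumRight Z j; μ] =
      ∑ j, (Fintype.card α * Fintype.card β + Fintype.card α * (Fintype.card β * n j) ^ 2
        + (Fintype.card α * m j) ^ 2 * Fintype.card β) := by
  rw [IndepFun.variance_sum (fun j _ => (h.indepFun_sumLeft_sumRight hZ j).memLp_two_mul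
      (memLp_sumLeft hL2 j) (memLp_sumRight hL2 j))
    fun j _ j' _ hjj' => h.pairwise_indepFun_sumLeft_mul_sumRight hZ hjj']
  refine Finset.sum_congr rfl fun j _ => ?_
  rw [(h.indepFun_sumLeft_sumRight hZ j).variance_mul (memLp_sumLeft hL2 j)
    (memLp_sumRight hL2 j), h.variance_sumLeft hL2 hvar, h.variance_sumRight hL2 hvar,
    integral_sumLeft hL2 (hm · j), integral_sumRight hL2 (hn · j)]

end BilinearSum

end ProbabilityTheory

theorem cross_class_estimator_mean_variance_general
    (d p q : ℕ) (hp : 1 ≤ p) (hq : 1 ≤ q)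
    (μv νv : Fin d → ℝ)
    (Ω : Type*) [MeasurableSpace Ω] (μ : Measure Ω) [IsProbabilityMeasure μ]
    (Z : (Fin p ⊕ Fin q) × Fin d → Ω → ℝ)
    (hmeas : ∀ s, Measurable (Z s))
    (hindep : iIndepFun Z μ)
    (hlawX : ∀ (k : Fin p) (j : Fin d),
      μ.map (Z (Sum.inl k, j)) = gaussianReal (μv j) 1)
    (hlawX' : ∀ (l : Fin q) (j : Fin d),
      μ.map (Z (Sum.inr l, j)) = gaussianReal (νv j) 1)
    (T : Ω → ℝ)
    (hT : T = fun ω => (1 / ((p : ℝ) * q)) *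
      ∑ k : Fin p, ∑ l : Fin q, ∑ j : Fin d,
        Z (Sum.inl k, j) ω * Z (Sum.inr l, j) ω) :
    (∫ ω, T ω ∂μ) = ∑ j : Fin d, μv j * νv j ∧
    variance T μ
      = (∑ j : Fin d, μv j ^ 2) / q + (∑ j : Fin d, νv j ^ 2) / p
        + (d : ℝ) / ((p : ℝ) * q) := by
  have hlaw : ∀ s,
      HasLaw (Z s) (gaussianReal (Sum.elim (fun _ => μv s.2) (fun _ => νv s.2) s.1) 1) μ
    | (.inl k, j) => ⟨(hmeas _).aemeasurable, hlawX k j⟩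
    | (.inr l, j) => ⟨(hmeas _).aemeasurable, hlawX' l j⟩
  have hL2 : ∀ s, MemLp (Z s) 2 μ := fun s => (hlaw s).memLp_of_gaussianReal 2
  have hvar : ∀ s, Var[Z s; μ] = 1 := fun s =>
    (hlaw s).variance_eq_of_gaussianReal.trans NNReal.coe_one
  have hm : ∀ k j, μ[Z (.inl k, j)] = μv j := fun k j =>
    (hlaw (.inl k, j)).integral_eq_of_gaussianReal
  have hn : ∀ l j, μ[Z (.inr l, j)] = νv j := fun l j =>
    (hlaw (.inr l, j)).integral_eq_of_gaussianReal
  have hT' : T = fun ω => (1 / ((p : ℝ) * q)) * (∑ j, sumLeft Z j * sumRight Z j) ω := by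
    simp only [hT, sumLeft, sumRight, Finset.sum_apply, Pi.mul_apply, Finset.sum_mul_sum]
    exact funext fun ω => congrArg _
      ((Finset.sum_congr rfl fun _ _ => Finset.sum_comm).trans Finset.sum_comm)
  have hp0 : (p : ℝ) ≠ 0 := Nat.cast_ne_zero.mpr (by omega)
  have hq0 : (q : ℝ) ≠ 0 := Nat.cast_ne_zero.mpr (by omega)
  refine ⟨?_, ?_⟩
  · rw [hT', integral_const_mul, hindep.integral_sum_sumLeft_mul_sumRight hmeas hL2 hm hn]
    simp only [Fintype.card_fin, Finset.mul_sum]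
    field_simp
  · rw [hT', variance_const_mul, hindep.variance_sum_sumLeft_mul_sumRight hmeas hL2 hvar hm hn]
    simp only [Fintype.card_fin, Finset.sum_add_distrib, Finset.sum_const, Finset.card_univ]
    field_simp
    rw [← Finset.mul_sum, ← Finset.mul_sum, nsmul_eq_mul]
    ring

/-- Cross-class estimator. Let `x_1,…,x_p` be i.i.d. `N(μ, I_d)` and
`x'_1,…,x'_q` i.i.d. `N(ν, I_d)`, all independent (modeled here by all coordinates of all
vectors being independent with the corresponding Gaussian coordinate distributions). Then
`T = (1/(pq))·Σ_k Σ_l ⟨x_k, x'_l⟩` satisfies `E[T] = ⟨μ, ν⟩` and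
`Var(T) = ‖μ‖²/q + ‖ν‖²/p + d/(pq)`. -/
theorem cross_class_estimator_mean_variance
    (d p q : ℕ) (hd : 1 ≤ d) (hp : 1 ≤ p) (hq : 1 ≤ q)
    (μv νv : Fin d → ℝ)
    (Ω : Type*) [MeasurableSpace Ω] (μ : Measure Ω) [IsProbabilityMeasure μ]
    (Z : (Fin p ⊕ Fin q) × Fin d → Ω → ℝ)
    (hmeas : ∀ s, Measurable (Z s))
    (hindep : iIndepFun Z μ)
    (hlawX : ∀ (k : Fin p) (j : Fin d),
      μ.map (Z (Sum.inl k, j)) = gaussianReal (μv j) 1)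
    (hlawX' : ∀ (l : Fin q) (j : Fin d),
      μ.map (Z (Sum.inr l, j)) = gaussianReal (νv j) 1)
    (T : Ω → ℝ)
    (hT : T = fun ω => (1 / ((p : ℝ) * q)) *
      ∑ k : Fin p, ∑ l : Fin q, ∑ j : Fin d,
        Z (Sum.inl k, j) ω * Z (Sum.inr l, j) ω) :
    (∫ ω, T ω ∂μ) = ∑ j : Fin d, μv j * νv j ∧
    variance T μ
      = (∑ j : Fin d, μv j ^ 2) / q + (∑ j : Fin d, νv j ^ 2) / p
        + (d : ℝ) / ((p : ℝ) * q) :=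
  cross_class_estimator_mean_variance_general d p q hp hq μv νv Ω μ Z hmeas hindep hlawX hlawX' T hT
end
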